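/- In a star with center n and weak preferences, if there exists a reachable crucial assignment for target object o_1 and leaf agent k, then there exists a simple sequence of swaps (one in which every leaf agent participates in at most one swap) reaching a crucial assignment, and in this sequence σ_i(k) ⪰_n o_1 holds at every step i. -/
import Mathlib


/-- An assignment maps agents to objects bijectively (agents and objects are both `Fin n`;
object `o_i` is identified with index `i`, agent `i` initially holds `o_i`). -/
abbrev Assignment (n : ℕ) := Equiv.Perm (Fin n)

/-- A rational swap under weak preferences (`u j o` is agent `j`'s utility for object `o`,
so `o ⪰_j o'` iff `u j o ≥ u j o'`): two adjacent agents exchange objects, each receiving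
an object at least as good as the one given up. -/
def WeakSwapStep {n : ℕ} (adj : Fin n → Fin n → Prop) (u : Fin n → Fin n → ℕ)
    (σ σ' : Assignment n) : Prop :=
  ∃ a b : Fin n, adj a b ∧ u a (σ b) ≥ u a (σ a) ∧ u b (σ a) ≥ u b (σ b) ∧
    σ' = σ * Equiv.swap a b

/-- `σseq 0, σseq 1, …, σseq t` is a sequence of swaps under weak preferences. -/
def WeakSwapSeq {n : ℕ} (adj : Fin n → Fin n → Prop) (u : Fin n → Fin n → ℕ)
    (σseq : ℕ → Assignment n) (t : ℕ) : Prop :=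
  ∀ m < t, WeakSwapStep adj u (σseq m) (σseq (m + 1))

/-- Adjacency of the star with center `c`: every other agent is a leaf adjacent only to `c`. -/
def starAdj {n : ℕ} (c : Fin n) (i j : Fin n) : Prop := (i = c ∨ j = c) ∧ i ≠ j

/-- `σ` is reachable from the identity endowment via weak rational swaps. -/
def WReachableAssign {n : ℕ} (adj : Fin n → Fin n → Prop) (u : Fin n → Fin n → ℕ)
    (σ : Assignment n) : Prop :=
  ∃ t σseq, σseq 0 = 1 ∧ WeakSwapSeq adj u σseq t ∧ σseq t = σ

/-- Object `o` is reachable for agent `k` from the identity endowment via weak rational swaps. -/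
def WReachableObj {n : ℕ} (adj : Fin n → Fin n → Prop) (u : Fin n → Fin n → ℕ)
    (k o : Fin n) : Prop :=
  ∃ t σseq, σseq 0 = 1 ∧ WeakSwapSeq adj u σseq t ∧ σseq t k = o

lemma step_spec {n : ℕ} (u : Fin n → Fin n → ℕ) (c : Fin n) {σ σ' : Assignment n}
    (h : WeakSwapStep (starAdj c) u σ σ') :
    ∃ l, l ≠ c ∧ σ' = σ * Equiv.swap c l ∧
      u c (σ l) ≥ u c (σ c) ∧ u l (σ c) ≥ u l (σ l) := by
  obtain ⟨a, b, ⟨hab, hne⟩, h1, h2, h3⟩ := h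
  rcases hab with rfl | rfl
  · exact ⟨b, Ne.symm hne, h3, h1, h2⟩
  · exact ⟨a, hne, by rw [h3, Equiv.swap_comm], h2, h1⟩

lemma mono_self {n : ℕ} (u : Fin n → Fin n → ℕ) (c : Fin n) {τ : ℕ → Assignment n} {t : ℕ}
    (hseq : WeakSwapSeq (starAdj c) u τ t) (j : Fin n) :
    ∀ m1 m2, m1 ≤ m2 → m2 ≤ t → u j (τ m1 j) ≤ u j (τ m2 j) := by
  intro m1 m2 h12 h2t
  induction m2, h12 using Nat.le_induction with
  | base => exact le_rfl
  | succ m2 hm ih =>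
    have hlt : m2 < t := by omega
    obtain ⟨l, hl, heq, hc, hll⟩ := step_spec u c (hseq m2 hlt)
    have ih' := ih (by omega)
    have hstep : u j (τ m2 j) ≤ u j (τ (m2+1) j) := by
      rw [heq, Equiv.Perm.mul_apply]
      rcases eq_or_ne j c with rfl | hjc
      · rw [Equiv.swap_apply_left]; exact hc
      · rcases eq_or_ne j l with rfl | hjl
        · rw [Equiv.swap_apply_right]; exact hll
        · rw [Equiv.swap_apply_of_ne_of_ne hjc hjl]
    omega

lemma anti_center {n : ℕ} (u : Fin n → Fin n → ℕ) (c : Fin n) {τ : ℕ → Assignment n} {t : ℕ}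
    (hseq : WeakSwapSeq (starAdj c) u τ t) (j : Fin n) (hj : j ≠ c) :
    ∀ m1 m2, m1 ≤ m2 → m2 ≤ t → u c (τ m2 j) ≤ u c (τ m1 j) := by
  intro m1 m2 h12 h2t
  induction m2, h12 using Nat.le_induction with
  | base => exact le_rfl
  | succ m2 hm ih =>
    have hlt : m2 < t := by omega
    obtain ⟨l, hl, heq, hc, hll⟩ := step_spec u c (hseq m2 hlt)
    have ih' := ih (by omega)
    have hstep : u c (τ (m2+1) j) ≤ u c (τ m2 j) := by
      rw [heq, Equiv.Perm.mul_apply]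
      rcases eq_or_ne j l with rfl | hjl
      · rw [Equiv.swap_apply_right]; exact hc
      · rw [Equiv.swap_apply_of_ne_of_ne hj hjl]
    omega

lemma chain_exists {n : ℕ} (u : Fin n → Fin n → ℕ) (c : Fin n) {τ : ℕ → Assignment n} {t : ℕ}
    (hτ0 : τ 0 = 1) (hseq : WeakSwapSeq (starAdj c) u τ t) :
    ∀ m, m ≤ t → ∀ b, b ≠ c → τ m b ≠ b →
    ∃ mm, ∃ d : ℕ → Fin n, d 0 = c ∧ d mm = b ∧
      (∀ i j, i ≤ mm → j ≤ mm → d i = d j → i = j) ∧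
      (∀ i, i < mm → ∃ s, s + 1 ≤ m ∧ τ s c = d i ∧ τ s (d (i+1)) = d (i+1) ∧
        τ (s+1) c = d (i+1) ∧ τ (s+1) (d (i+1)) = d i) := by
  intro m
  induction m with
  | zero =>
    intro _ b _ hb
    simp [hτ0] at hb
  | succ m ih =>
    intro hmt b hbc hb
    have hmt' : m ≤ t := by omega
    obtain ⟨l, hlc, heq, hc, hll⟩ := step_spec u c (hseq m (by omega))
    have happ : ∀ x, τ (m+1) x = τ m (Equiv.swap c l x) := by
      intro x; rw [heq, Equiv.Perm.mul_apply]
    rcases eq_or_ne b l with hbl | hbl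
    · subst hbl
      by_cases hfresh : τ m b = b
      · -- first-time swap for leaf b
        have hmc : τ (m+1) c = b := by rw [happ, Equiv.swap_apply_left, hfresh]
        have hml : τ (m+1) b = τ m c := by rw [happ, Equiv.swap_apply_right]
        by_cases hcc : τ m c = c
        · refine ⟨1, fun i => if i = 0 then c else b, by simp, by simp, ?_, ?_⟩
          · intro i j hi hj hij
            interval_cases i <;> interval_cases j <;> simp_all
          · intro i hi
            interval_cases i
            show ∃ s, s + 1 ≤ m + 1 ∧ τ s c = c ∧ τ s b = b ∧ τ (s+1) c = b ∧ τ (s+1) b = c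
            exact ⟨m, le_rfl, hcc, hfresh, hmc, by rw [hml, hcc]⟩
        · set e := τ m c with he
          have hec : e ≠ c := hcc
          have hee : τ m e ≠ e := by
            intro h
            exact hec ((τ m).injective (h.trans he))
          obtain ⟨mm, d, hd0, hdm, hinj, hwit⟩ := ih hmt' e hec hee
          by_cases hin : ∃ i, i ≤ mm ∧ d i = b
          · obtain ⟨i, hile, hdi⟩ := hin
            refine ⟨i, d, hd0, hdi, ?_, ?_⟩
            · exact fun a b' ha hb' h => hinj a b' (ha.trans hile) (hb'.trans hile) h
            · intro i' hi'
              obtain ⟨s, hs, h1, h2, h3, h4⟩ := hwit i' (lt_of_lt_of_le hi' hile)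
              exact ⟨s, by omega, h1, h2, h3, h4⟩
          · push_neg at hin
            set d' : ℕ → Fin n := fun i => if i = mm + 1 then b else d i with hd'
            have hD1 : ∀ i, i ≤ mm → d' i = d i := by
              intro i hi; simp only [hd', if_neg (by omega : i ≠ mm + 1)]
            have hD2 : d' (mm + 1) = b := by simp [hd']
            refine ⟨mm + 1, d', by rw [hD1 0 (by omega), hd0], hD2, ?_, ?_⟩
            · intro a b' ha hb' h
              rcases Nat.lt_or_ge a (mm + 1) with ha' | ha' <;>
                rcases Nat.lt_or_ge b' (mm + 1) with hb'' | hb''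
              · rw [hD1 a (by omega), hD1 b' (by omega)] at h
                exact hinj a b' (by omega) (by omega) h
              · have hb3 : b' = mm + 1 := by omega
                rw [hD1 a (by omega), hb3, hD2] at h
                exact absurd h (hin a (by omega))
              · have ha3 : a = mm + 1 := by omega
                rw [hD1 b' (by omega), ha3, hD2] at h
                exact absurd h.symm (hin b' (by omega))
              · omega
            · intro i hi
              by_cases hi' : i < mm
              · obtain ⟨s, hs, h1, h2, h3, h4⟩ := hwit i hi'
                rw [hD1 i (by omega), hD1 (i+1) (by omega)]
                exact ⟨s, by omega, h1, h2, h3, h4⟩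
              · have hieq : i = mm := by omega
                rw [hieq, hD1 mm le_rfl, hD2, hdm]
                exact ⟨m, le_rfl, he.symm, hfresh, hmc, hml⟩
      · -- leaf b has swapped before: use IH directly
        obtain ⟨mm, d, hd0, hdm, hinj, hwit⟩ := ih hmt' b hbc hfresh
        refine ⟨mm, d, hd0, hdm, hinj, ?_⟩
        intro i hi
        obtain ⟨s, hs, h1, h2, h3, h4⟩ := hwit i hi
        exact ⟨s, by omega, h1, h2, h3, h4⟩
    · -- b ≠ l : unaffected by this swap
      have hbfix : τ (m+1) b = τ m b := by
        rw [happ, Equiv.swap_apply_of_ne_of_ne hbc hbl]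
      rw [hbfix] at hb
      obtain ⟨mm, d, hd0, hdm, hinj, hwit⟩ := ih hmt' b hbc hb
      refine ⟨mm, d, hd0, hdm, hinj, ?_⟩
      intro i hi
      obtain ⟨s, hs, h1, h2, h3, h4⟩ := hwit i hi
      exact ⟨s, by omega, h1, h2, h3, h4⟩

lemma main_aux {n : ℕ} (u : Fin n → Fin n → ℕ) (c o0 k : Fin n)
    (hoc : o0 ≠ c) (hk : k ≠ c) (t : ℕ) (τ : ℕ → Assignment n)
    (hτ0 : τ 0 = 1) (hseq : WeakSwapSeq (starAdj c) u τ t)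
    (hτc : τ t c = o0)
    (hk1 : u k o0 ≥ u k (τ t k)) (hk2 : u c (τ t k) ≥ u c o0) :
    ∃ t' σseq, σseq 0 = 1 ∧ WeakSwapSeq (starAdj c) u σseq t' ∧
      (∀ a : Fin n, a ≠ c →
        ((Finset.range t').filter (fun m => σseq (m + 1) a ≠ σseq m a)).card ≤ 1) ∧
      (σseq t' c = o0 ∧ u k o0 ≥ u k (σseq t' k) ∧ u c (σseq t' k) ≥ u c o0) ∧
      (∀ i ≤ t', u c (σseq i k) ≥ u c o0) := by
  have hto : τ t o0 ≠ o0 := by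
    intro h
    exact hoc ((τ t).injective (h.trans hτc.symm))
  obtain ⟨mm, d, hd0, hdm, hinj, hwit⟩ := chain_exists u c hτ0 hseq t le_rfl o0 hoc hto
  -- chain entries other than d 0 are leaves
  have hdc : ∀ j, j < mm → d (j+1) ≠ c := by
    intro j hj h
    have := hinj (j+1) 0 (by omega) (by omega) (by rw [h, hd0])
    omega
  -- the constructed sequence
  set σ' : ℕ → Assignment n := fun i =>
    Nat.rec 1 (fun j ihv => if j < mm then ihv * Equiv.swap c (d (j+1)) else ihv) i with hσ'
  have hsucc : ∀ j, σ' (j+1) = if j < mm then σ' j * Equiv.swap c (d (j+1)) else σ' j :=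
    fun j => rfl
  -- key computation of σ'
  have hcomp : ∀ i, i ≤ mm → (σ' i c = d i) ∧ (∀ j, j < i → σ' i (d (j+1)) = d j) ∧
      (∀ x, x ≠ c → (∀ j, j < i → x ≠ d (j+1)) → σ' i x = x) := by
    intro i
    induction i with
    | zero =>
      intro _
      refine ⟨by simp [hσ', hd0], fun j hj => absurd hj (by omega), fun x _ _ => rfl⟩
    | succ i ihi =>
      intro hi
      have hilt : i < mm := by omega
      obtain ⟨ihc, ihd, ihfix⟩ := ihi (by omega)
      have hst : σ' (i+1) = σ' i * Equiv.swap c (d (i+1)) := by rw [hsucc, if_pos hilt]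
      have hlc := hdc i hilt
      have hlnot : ∀ j, j < i → d (i+1) ≠ d (j+1) := by
        intro j hj h
        have := hinj (i+1) (j+1) (by omega) (by omega) h
        omega
      have happ : ∀ x, σ' (i+1) x = σ' i (Equiv.swap c (d (i+1)) x) := by
        intro x; rw [hst, Equiv.Perm.mul_apply]
      refine ⟨?_, ?_, ?_⟩
      · rw [happ, Equiv.swap_apply_left]
        exact (ihfix (d (i+1)) hlc hlnot).trans rfl
      · intro j hj
        rcases Nat.lt_or_ge j i with hji | hji
        · rw [happ, Equiv.swap_apply_of_ne_of_ne (hdc j (by omega)) (fun h => hlnot j hji h.symm)]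
          exact ihd j hji
        · have : j = i := by omega
          subst this
          rw [happ, Equiv.swap_apply_right, ihc]
      · intro x hxc hxd
        rw [happ, Equiv.swap_apply_of_ne_of_ne hxc (hxd i (by omega))]
        exact ihfix x hxc (fun j hj => hxd j (by omega))
  refine ⟨mm, σ', rfl, ?_, ?_, ?_, ?_⟩
  · -- it is a weak swap sequence
    intro m hm
    obtain ⟨s, hs, hw1, hw2, hw3, hw4⟩ := hwit m hm
    obtain ⟨hcm, _, hfixm⟩ := hcomp m (by omega)
    have hfixl : σ' m (d (m+1)) = d (m+1) := by
      refine hfixm (d (m+1)) (hdc m hm) ?_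
      intro j hj h
      have := hinj (m+1) (j+1) (by omega) (by omega) h
      omega
    refine ⟨d (m+1), c, ⟨Or.inr rfl, hdc m hm⟩, ?_, ?_, ?_⟩
    · rw [hcm, hfixl]
      have h1 := mono_self u c hseq (d (m+1)) 0 (s+1) (by omega) hs
      rw [hτ0, Equiv.Perm.one_apply, hw4] at h1
      exact h1
    · rw [hcm, hfixl]
      have h2 := mono_self u c hseq c s (s+1) (by omega) hs
      rw [hw1, hw3] at h2
      exact h2
    · rw [hsucc, if_pos hm, Equiv.swap_comm]
  · -- simplicity
    intro a hac
    rw [Finset.card_le_one]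
    intro x hx y hy
    simp only [Finset.mem_filter, Finset.mem_range] at hx hy
    have key : ∀ z, z < mm → σ' (z+1) a ≠ σ' z a → a = d (z+1) := by
      intro z hz hne
      by_contra h
      apply hne
      rw [hsucc, if_pos hz, Equiv.Perm.mul_apply,
        Equiv.swap_apply_of_ne_of_ne hac h]
    have hxa := key x hx.1 hx.2
    have hya := key y hy.1 hy.2
    have := hinj (x+1) (y+1) (by omega) (by omega) (by rw [← hxa, ← hya])
    omega
  · -- crucial final assignment
    have hfin : σ' mm c = o0 := by rw [(hcomp mm le_rfl).1, hdm]
    refine ⟨hfin, ?_, ?_⟩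
    · -- u k o0 ≥ u k (σ' mm k)
      by_cases hkin : ∃ j, j < mm ∧ d (j+1) = k
      · obtain ⟨j, hj, hdj⟩ := hkin
        have hσk : σ' mm k = d j := by rw [← hdj]; exact (hcomp mm le_rfl).2.1 j hj
        obtain ⟨s, hs, hw1, hw2, hw3, hw4⟩ := hwit j hj
        rw [hdj] at hw4
        have h1 := mono_self u c hseq k (s+1) t hs le_rfl
        rw [hw4] at h1
        rw [hσk]
        omega
      · push_neg at hkin
        have hσk : σ' mm k = k :=
          (hcomp mm le_rfl).2.2 k hk (fun j hj h => hkin j hj h.symm)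
        have h1 := mono_self u c hseq k 0 t (by omega) le_rfl
        rw [hτ0, Equiv.Perm.one_apply] at h1
        rw [hσk]
        omega
    · -- u c (σ' mm k) ≥ u c o0
      by_cases hkin : ∃ j, j < mm ∧ d (j+1) = k
      · obtain ⟨j, hj, hdj⟩ := hkin
        have hσk : σ' mm k = d j := by rw [← hdj]; exact (hcomp mm le_rfl).2.1 j hj
        obtain ⟨s, hs, hw1, hw2, hw3, hw4⟩ := hwit j hj
        rw [hdj] at hw4
        have h1 := anti_center u c hseq k hk (s+1) t hs le_rfl
        rw [hw4] at h1
        rw [hσk]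
        omega
      · push_neg at hkin
        have hσk : σ' mm k = k :=
          (hcomp mm le_rfl).2.2 k hk (fun j hj h => hkin j hj h.symm)
        have h1 := anti_center u c hseq k hk 0 t (by omega) le_rfl
        rw [hτ0, Equiv.Perm.one_apply] at h1
        rw [hσk]
        omega
  · -- invariant
    intro i hi
    have hbase : u c k ≥ u c o0 := by
      have h1 := anti_center u c hseq k hk 0 t (by omega) le_rfl
      rw [hτ0, Equiv.Perm.one_apply] at h1
      omega
    by_cases hkin : ∃ j, j < i ∧ d (j+1) = k
    · obtain ⟨j, hj, hdj⟩ := hkin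
      have hσk : σ' i k = d j := by rw [← hdj]; exact (hcomp i hi).2.1 j hj
      obtain ⟨s, hs, hw1, hw2, hw3, hw4⟩ := hwit j (by omega)
      rw [hdj] at hw4
      have h1 := anti_center u c hseq k hk (s+1) t hs le_rfl
      rw [hw4] at h1
      rw [hσk]
      omega
    · push_neg at hkin
      have hσk : σ' i k = k :=
        (hcomp i hi).2.2 k hk (fun j hj h => hkin j hj h.symm)
      rw [hσk]
      exact hbase

/-- 0-indexed: `o_1` is object `0`, the center agent is `n-1`: in a star with
weak preferences and a leaf agent `k ≠ n-1`, if some reachable assignment is crucial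
(`σ(center) = o_1`, `o_1 ⪰_k σ(k)`, `σ(k) ⪰_center o_1`), then there is a simple sequence of
swaps (every leaf participates in at most one swap) reaching a crucial assignment, and along
it `σ_i(k) ⪰_center o_1` at every step `i`. -/
theorem star_simple_sequence_to_crucial {n : ℕ} (hn : 1 < n)
    (u : Fin n → Fin n → ℕ)
    (k : Fin n) (hk : k ≠ ⟨n - 1, by omega⟩)
    (hex : ∃ σ : Assignment n, WReachableAssign (starAdj ⟨n - 1, by omega⟩) u σ ∧
      σ ⟨n - 1, by omega⟩ = ⟨0, by omega⟩ ∧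
      u k ⟨0, by omega⟩ ≥ u k (σ k) ∧
      u ⟨n - 1, by omega⟩ (σ k) ≥ u ⟨n - 1, by omega⟩ ⟨0, by omega⟩) :
    ∃ t σseq, σseq 0 = 1 ∧ WeakSwapSeq (starAdj ⟨n - 1, by omega⟩) u σseq t ∧
      -- simple: each leaf agent participates in at most one swap
      (∀ a : Fin n, a ≠ ⟨n - 1, by omega⟩ →
        ((Finset.range t).filter (fun m => σseq (m + 1) a ≠ σseq m a)).card ≤ 1) ∧
      -- the final assignment is crucial
      (σseq t ⟨n - 1, by omega⟩ = ⟨0, by omega⟩ ∧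
        u k ⟨0, by omega⟩ ≥ u k (σseq t k) ∧
        u ⟨n - 1, by omega⟩ (σseq t k) ≥ u ⟨n - 1, by omega⟩ ⟨0, by omega⟩) ∧
      -- the invariant σ_i(k) ⪰_center o_1 holds at every step
      (∀ i ≤ t, u ⟨n - 1, by omega⟩ (σseq i k) ≥ u ⟨n - 1, by omega⟩ ⟨0, by omega⟩) := by

  obtain ⟨σfin, ⟨t, τ, hτ0, hseq, hτt⟩, hσc, hk1, hk2⟩ := hex
  subst hτt
  have hoc : (⟨0, by omega⟩ : Fin n) ≠ ⟨n - 1, by omega⟩ := by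
    simp only [ne_eq, Fin.mk.injEq]
    omega
  exact main_aux u ⟨n - 1, by omega⟩ ⟨0, by omega⟩ k hoc hk t τ hτ0 hseq hσc hk1 hk2
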